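/- arXiv:2407.09406 — 2 statements merged into one kernel-verified Lean document; each statement's English description precedes it below -/
import Mathlib

section
/- Let (μₙ) be a sequence of Borel probability measures on [0,1], each a Rajchman measure on ℝ (μ̂ₙ(s) → 0 as |s| → ∞), with supports shrinking to zero. Then there exist a subsequence (nₖ) and a sequence εₖ → 0⁺ such that, with λₖ the uniform probability measure on [0, εₖ], we have Σₖ |λ̂ₖ(s) - μ̂_{nₖ}(s)|² ≤ 5 for all s ∈ ℝ. -/
open MeasureTheory Complex Real Set Filter

open ProbabilityTheory Topology

/-!
Substituting `t = -2πs` turns both transforms into characteristic functions. A probability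
measure carried by `[-d, d]` has `‖φ(t) - 1‖ ≤ |t| d`, while the uniform law on `[0, ε]` has
`‖φ(t)‖ ≤ 2 / (|t| ε)`. Thresholds `T₀ ≤ T₁ ≤ ⋯` are chosen recursively: at stage `k` take `n_k`
(with `δ_{n_k}` small) and `ε_k` so small that the `k`-th difference is at most `2^{-(k+1)}` for
`|t| ≤ T_k`, and then, using the Rajchman property of `μ_{n_k}`, take `T_{k+1}` so large that both
transforms are at most `2^{-(k+2)}` for `|t| ≥ T_{k+1}`. For a fixed `t` at most one index `k`
has `T_k < |t| < T_{k+1}`; that term is at most `2² = 4`, so the sum is at most `4 + 1/3`.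
-/

lemma integral_exp_neg_two_pi_mul_eq_charFun (μ : Measure ℝ) (s : ℝ) :
    ∫ x, exp (-2 * π * I * s * x) ∂μ = charFun μ (-2 * π * s) := by
  rw [charFun_apply_real]
  congr 1 with x
  push_cast
  ring_nf

lemma setIntegral_Icc_inv_smul_eq_charFun {ε : ℝ} (hε : 0 < ε) (s : ℝ) :
    ∫ x in Icc (0 : ℝ) ε, ε⁻¹ • exp (-2 * π * I * s * x) =
      charFun (volume[|Icc (0 : ℝ) ε]) (-2 * π * s) := by
  rw [← integral_exp_neg_two_pi_mul_eq_charFun, ProbabilityTheory.cond, integral_smul_measure,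
    integral_smul, Real.volume_Icc, sub_zero, ENNReal.toReal_inv, ENNReal.toReal_ofReal hε.le]

lemma Filter.Tendsto.of_comp_mul_left_cocompact {𝕜 α : Type*} [DivisionRing 𝕜]
    [TopologicalSpace 𝕜] [ContinuousMul 𝕜] {f : 𝕜 → α} {l : Filter α} {a : 𝕜} (ha : a ≠ 0)
    (h : Tendsto (fun x => f (a * x)) (cocompact 𝕜) l) : Tendsto f (cocompact 𝕜) l := by
  simpa [Function.comp_def, mul_inv_cancel_left₀ ha] using
    h.comp (tendsto_cocompact_mul_left (mul_inv_cancel₀ ha))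

lemma Filter.Tendsto.exists_norm_le_of_cocompact {E F : Type*} [NormedAddCommGroup E]
    [ProperSpace E] [NormedAddCommGroup F] {f : E → F} (hf : Tendsto f (cocompact E) (𝓝 0))
    {c : ℝ} (hc : 0 < c) : ∃ R, ∀ x, R ≤ ‖x‖ → ‖f x‖ ≤ c := by
  have h := hf.eventually (Metric.closedBall_mem_nhds 0 hc)
  rw [← Metric.cobounded_eq_cocompact, ← comap_norm_atTop, eventually_comap,
    eventually_atTop] at h
  obtain ⟨R, hR⟩ := h
  exact ⟨R, fun x hx => by simpa using hR ‖x‖ hx x rfl⟩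

lemma norm_charFun_sub_one_le {μ : Measure ℝ} [IsProbabilityMeasure μ] {d : ℝ}
    (hμ : ∀ᵐ x ∂μ, |x| ≤ d) (t : ℝ) : ‖charFun μ t - 1‖ ≤ |t| * d := by
  have hint : Integrable (fun x : ℝ => exp (t * x * I)) μ :=
    .of_bound (by fun_prop) 1 (.of_forall fun x => by
      rw [← ofReal_mul, norm_exp_ofReal_mul_I])
  calc ‖charFun μ t - 1‖ = ‖∫ x, (exp (t * x * I) - 1) ∂μ‖ := by
        rw [integral_sub hint (integrable_const 1), charFun_apply_real]; simp
    _ ≤ |t| * d := by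
        refine (norm_integral_le_of_norm_le_const (C := |t| * d) ?_).trans_eq (by simp)
        filter_upwards [hμ] with x hx
        calc ‖exp (t * x * I) - 1‖ = ‖exp (I * ↑(t * x)) - 1‖ := by push_cast; ring_nf
          _ ≤ ‖t * x‖ := norm_exp_I_mul_ofReal_sub_one_le
          _ ≤ |t| * d := by rw [norm_mul, Real.norm_eq_abs, Real.norm_eq_abs]; gcongr

lemma norm_charFun_sub_charFun_le {μ ν : Measure ℝ} [IsProbabilityMeasure μ]
    [IsProbabilityMeasure ν] {a b : ℝ} (hμ : ∀ᵐ x ∂μ, |x| ≤ a) (hν : ∀ᵐ x ∂ν, |x| ≤ b)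
    (t : ℝ) : ‖charFun μ t - charFun ν t‖ ≤ |t| * (a + b) :=
  calc ‖charFun μ t - charFun ν t‖ = ‖(charFun μ t - 1) - (charFun ν t - 1)‖ := by ring_nf
    _ ≤ ‖charFun μ t - 1‖ + ‖charFun ν t - 1‖ := norm_sub_le _ _
    _ ≤ |t| * a + |t| * b :=
        add_le_add (norm_charFun_sub_one_le hμ t) (norm_charFun_sub_one_le hν t)
    _ = |t| * (a + b) := by ring

lemma norm_charFun_sub_charFun_le_two {E : Type*} [MeasurableSpace E]
    [SeminormedAddCommGroup E] [InnerProductSpace ℝ E] {μ ν : Measure E}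
    [IsProbabilityMeasure μ] [IsProbabilityMeasure ν] (t : E) :
    ‖charFun μ t - charFun ν t‖ ≤ 2 :=
  (norm_sub_le _ _).trans
    (by linarith [norm_charFun_le_one (μ := μ) t, norm_charFun_le_one (μ := ν) t])

lemma isProbabilityMeasure_cond_Icc {ε : ℝ} (hε : 0 < ε) :
    IsProbabilityMeasure (volume[|Icc (0 : ℝ) ε]) :=
  cond_isProbabilityMeasure_of_finite (by simp [hε]) (by simp)

lemma ae_abs_le_cond_Icc (ε : ℝ) : ∀ᵐ x ∂(volume[|Icc (0 : ℝ) ε]), |x| ≤ ε :=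
  ae_cond_of_forall_mem measurableSet_Icc fun _ hx => abs_le.2 ⟨by linarith [hx.1, hx.2], hx.2⟩

lemma charFun_cond_Icc {ε t : ℝ} (hε : 0 < ε) (ht : t ≠ 0) :
    charFun (volume[|Icc (0 : ℝ) ε]) t = ε⁻¹ * ((exp (t * ε * I) - 1) / (t * I)) := by
  have hexp : ∫ x in (0 : ℝ)..ε, exp (t * I * x) =
      (exp (t * I * ε) - exp (t * I * 0)) / (t * I) :=
    integral_exp_mul_complex (by simp [ht])
  rw [charFun_apply_real, ProbabilityTheory.cond, integral_smul_measure, Real.volume_Icc,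
    sub_zero, ENNReal.toReal_inv, ENNReal.toReal_ofReal hε.le, integral_Icc_eq_integral_Ioc,
    ← intervalIntegral.integral_of_le hε.le]
  simp only [mul_right_comm _ _ I] at hexp ⊢
  rw [hexp]
  simp

lemma norm_charFun_cond_Icc_le {ε t : ℝ} (hε : 0 < ε) (ht : t ≠ 0) :
    ‖charFun (volume[|Icc (0 : ℝ) ε]) t‖ ≤ 2 / (|t| * ε) := by
  have hnum : ‖exp (t * ε * I) - 1‖ ≤ 2 :=
    (norm_sub_le _ _).trans (by rw [← ofReal_mul, norm_exp_ofReal_mul_I]; norm_num)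
  rw [charFun_cond_Icc hε ht, norm_mul, norm_div]
  simp only [norm_inv, norm_mul, norm_I, mul_one, Complex.norm_real, Real.norm_eq_abs,
    abs_of_pos hε]
  calc ε⁻¹ * (‖exp (t * ε * I) - 1‖ / |t|) ≤ ε⁻¹ * (2 / |t|) := by gcongr
    _ = 2 / (|t| * ε) := by field_simp

lemma Monotone.exists_forall_ne_le_or_le {β : Type*} [LinearOrder β] {T : ℕ → β}
    (hT : Monotone T) (x : β) : ∃ k₀, ∀ k ≠ k₀, x ≤ T k ∨ T (k + 1) ≤ x := by
  by_cases h : ∃ k₀, T k₀ < x ∧ x < T (k₀ + 1)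
  · obtain ⟨k₀, h₁, h₂⟩ := h
    refine ⟨k₀, fun k hk => ?_⟩
    rcases hk.lt_or_gt with hk | hk
    · exact .inr ((hT (Nat.succ_le_of_lt hk)).trans h₁.le)
    · exact .inl (h₂.le.trans (hT hk))
  · push Not at h
    exact ⟨0, fun k _ => (le_or_gt x (T k)).imp_right (h k)⟩

lemma tsum_le_add_tsum_of_le_of_ne {a b : ℕ → ℝ} {C : ℝ} (k₀ : ℕ) (ha : ∀ k, 0 ≤ a k)
    (hb : Summable b) (hb₀ : ∀ k, 0 ≤ b k) (hk₀ : a k₀ ≤ C) (hab : ∀ k ≠ k₀, a k ≤ b k) :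
    ∑' k, a k ≤ C + ∑' k, b k := by
  set c : ℕ → ℝ := fun k => if k = k₀ then C else 0
  have hle : ∀ k, a k ≤ b k + c k := by
    intro k
    rcases eq_or_ne k k₀ with rfl | hk
    · simp only [c, if_pos rfl]; linarith [hb₀ k]
    · simpa [c, hk] using hab k hk
  have hs : Summable fun k => b k + c k := hb.add (hasSum_ite_eq k₀ C).summable
  calc ∑' k, a k ≤ ∑' k, (b k + c k) :=
        Summable.tsum_le_tsum hle (.of_nonneg_of_le ha hle hs) hs
    _ = C + ∑' k, b k := by
        rw [hb.tsum_add (hasSum_ite_eq k₀ C).summable, tsum_ite_eq, add_comm]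

lemma hasSum_sq_inv_two_pow_succ :
    HasSum (fun k : ℕ => ((2 : ℝ)⁻¹ ^ (k + 1)) ^ 2) (1 / 3) := by
  have h := (hasSum_geometric_of_lt_one (r := (4 : ℝ)⁻¹) (by norm_num) (by norm_num)).mul_left 4⁻¹
  rw [show (1 / 3 : ℝ) = 4⁻¹ * (1 - 4⁻¹)⁻¹ by norm_num]
  refine h.congr_fun fun k => ?_
  rw [← pow_mul, pow_mul']
  ring

section Subsequence

variable {μ : ℕ → Measure ℝ} [∀ n, IsProbabilityMeasure (μ n)] {δ : ℕ → ℝ}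

/-- Asking for `T < n ≤ T'` makes the indices chosen along a recursion on the thresholds alone
strictly increasing. -/
lemma exists_norm_charFun_sub_le_off_Ioo (hδ : Tendsto δ atTop (𝓝 0))
    (hsupp : ∀ n, ∀ᵐ x ∂μ n, |x| ≤ δ n) (hR : ∀ n, Tendsto (charFun (μ n)) (cocompact ℝ) (𝓝 0))
    {c : ℝ} (hc : 0 < c) (T : ℝ) :
    ∃ (n : ℕ) (ε T' : ℝ), T < n ∧ 0 < ε ∧ ε ≤ c ∧ (n : ℝ) ≤ T' ∧
      ∀ t, (|t| ≤ T ∨ T' ≤ |t|) →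
        ‖charFun (volume[|Icc (0 : ℝ) ε]) t - charFun (μ n) t‖ ≤ c := by
  set ε := c / (2 * (|T| + 1))
  have hε : 0 < ε := by positivity
  have := isProbabilityMeasure_cond_Icc hε
  obtain ⟨n, hTn, hδn⟩ := ((tendsto_natCast_atTop_atTop.eventually_gt_atTop T).and
    (hδ.eventually (ge_mem_nhds hε))).exists
  obtain ⟨R, hR⟩ := (hR n).exists_norm_le_of_cocompact (half_pos hc)
  refine ⟨n, ε, max n (max R (4 / (ε * c))), hTn, hε,
    div_le_self hc.le (by linarith [abs_nonneg T]), le_max_left _ _, fun t ht => ?_⟩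
  rcases ht with ht | ht
  · calc ‖charFun (volume[|Icc (0 : ℝ) ε]) t - charFun (μ n) t‖ ≤ |t| * (ε + δ n) :=
          norm_charFun_sub_charFun_le (ae_abs_le_cond_Icc ε) (hsupp n) t
      _ ≤ |t| * (2 * ε) := by gcongr; linarith
      _ ≤ (|T| + 1) * (2 * ε) := by gcongr; linarith [le_abs_self T]
      _ = c := by simp only [ε]; field_simp
  · have ht₁ : 4 / (ε * c) ≤ |t| := (le_max_right _ _).trans ((le_max_right _ _).trans ht)
    have ht₀ : t ≠ 0 := abs_pos.1 (lt_of_lt_of_le (by positivity) ht₁)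
    have huniform : 2 / (|t| * ε) ≤ c / 2 := by
      rw [div_le_iff₀ (by positivity)]
      rw [div_le_iff₀ (by positivity)] at ht₁
      nlinarith
    calc ‖charFun (volume[|Icc (0 : ℝ) ε]) t - charFun (μ n) t‖
        ≤ ‖charFun (volume[|Icc (0 : ℝ) ε]) t‖ + ‖charFun (μ n) t‖ := norm_sub_le _ _
      _ ≤ c / 2 + c / 2 := add_le_add ((norm_charFun_cond_Icc_le hε ht₀).trans huniform)
          (hR t ((le_max_left _ _).trans ((le_max_right _ _).trans ht)))
      _ = c := add_halves c

lemma exists_seq_norm_charFun_sub_le_off_Ioo (hδ : Tendsto δ atTop (𝓝 0))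
    (hsupp : ∀ n, ∀ᵐ x ∂μ n, |x| ≤ δ n) (hR : ∀ n, Tendsto (charFun (μ n)) (cocompact ℝ) (𝓝 0))
    {η : ℕ → ℝ} (hη : ∀ k, 0 < η k) (hη₀ : Tendsto η atTop (𝓝 0)) :
    ∃ (n : ℕ → ℕ) (ε T : ℕ → ℝ), StrictMono n ∧ (∀ k, 0 < ε k) ∧ Tendsto ε atTop (𝓝 0) ∧
      Monotone T ∧ ∀ k t, (|t| ≤ T k ∨ T (k + 1) ≤ |t|) →
        ‖charFun (volume[|Icc (0 : ℝ) (ε k)]) t - charFun (μ (n k)) t‖ ≤ η k := by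
  choose N E T' hTN hE hEη hNT' hclose using
    fun k => exists_norm_charFun_sub_le_off_Ioo hδ hsupp hR (hη k)
  let T : ℕ → ℝ := fun k => Nat.rec 0 (fun k Tk => T' k Tk) k
  refine ⟨fun k => N k (T k), fun k => E k (T k), T, strictMono_nat_of_lt_succ fun k => ?_,
    fun k => hE _ _, squeeze_zero (fun k => (hE _ _).le) (fun k => hEη _ _) hη₀,
    monotone_nat_of_le_succ fun k => (hTN k (T k)).le.trans (hNT' k (T k)),
    fun k => hclose k (T k)⟩
  exact_mod_cast (hNT' k (T k)).trans_lt (hTN (k + 1) (T (k + 1)))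

end Subsequence

theorem rajchman_subsequence_square_bound_general
    (μ : ℕ → Measure ℝ) (hprob : ∀ n, IsProbabilityMeasure (μ n))
    (δ : ℕ → ℝ) (hδ : Tendsto δ atTop (nhds 0))
    (hsupp : ∀ n, (μ n) (Icc (0:ℝ) (δ n))ᶜ = 0)
    (hRajchman : ∀ n, Tendsto (fun s : ℝ =>
        ∫ x : ℝ, Complex.exp (-2 * π * I * s * x) ∂(μ n)) (cocompact ℝ) (nhds 0)) :
    ∃ (nk : ℕ → ℕ) (ε : ℕ → ℝ), StrictMono nk ∧ (∀ k, 0 < ε k) ∧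
      Tendsto ε atTop (nhds 0) ∧
      ∀ s : ℝ,
        (∑' k : ℕ,
          ‖(∫ x : ℝ in Icc (0:ℝ) (ε k), (ε k)⁻¹ • Complex.exp (-2 * π * I * s * x)) -
            (∫ x : ℝ, Complex.exp (-2 * π * I * s * x) ∂(μ (nk k)))‖ ^ 2) ≤ 5 := by
  have hsupp' : ∀ n, ∀ᵐ x ∂μ n, |x| ≤ δ n := fun n => by
    filter_upwards [mem_ae_iff.2 (hsupp n)] with x hx
    exact abs_le.2 ⟨by linarith [hx.1, hx.2], hx.2⟩
  have hR : ∀ n, Tendsto (charFun (μ n)) (cocompact ℝ) (𝓝 0) := fun n =>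
    .of_comp_mul_left_cocompact (a := -2 * π) (by simp [pi_ne_zero])
      (by simpa only [integral_exp_neg_two_pi_mul_eq_charFun] using hRajchman n)
  obtain ⟨n, ε, T, hn, hε, hε₀, hT, hclose⟩ := exists_seq_norm_charFun_sub_le_off_Ioo hδ hsupp' hR
    (η := fun k => 2⁻¹ ^ (k + 1)) (fun k => by positivity)
    ((tendsto_pow_atTop_nhds_zero_of_lt_one (by norm_num) (by norm_num)).comp
      (tendsto_add_atTop_nat 1))
  refine ⟨n, ε, hn, hε, hε₀, fun s => ?_⟩
  simp only [setIntegral_Icc_inv_smul_eq_charFun (hε _), integral_exp_neg_two_pi_mul_eq_charFun]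
  obtain ⟨k₀, hk₀⟩ := hT.exists_forall_ne_le_or_le |-2 * π * s|
  have := isProbabilityMeasure_cond_Icc (hε k₀)
  refine (tsum_le_add_tsum_of_le_of_ne k₀ (fun _ => by positivity)
    hasSum_sq_inv_two_pow_succ.summable (fun _ => by positivity)
    (pow_le_pow_left₀ (norm_nonneg _) (norm_charFun_sub_charFun_le_two _) 2)
    fun k hk => pow_le_pow_left₀ (norm_nonneg _) (hclose k _ (hk₀ k hk)) 2).trans ?_
  rw [hasSum_sq_inv_two_pow_succ.tsum_eq]
  norm_num

theorem rajchman_subsequence_square_bound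
    (μ : ℕ → Measure ℝ) (hprob : ∀ n, IsProbabilityMeasure (μ n))
    (δ : ℕ → ℝ) (hδ_pos : ∀ n, 0 < δ n) (hδ : Tendsto δ atTop (nhds 0))
    (hsupp : ∀ n, (μ n) (Icc (0:ℝ) (δ n))ᶜ = 0)
    (hRajchman : ∀ n, Tendsto (fun s : ℝ =>
        ∫ x : ℝ, Complex.exp (-2 * π * I * s * x) ∂(μ n)) (cocompact ℝ) (nhds 0)) :
    ∃ (nk : ℕ → ℕ) (ε : ℕ → ℝ), StrictMono nk ∧ (∀ k, 0 < ε k) ∧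
      Tendsto ε atTop (nhds 0) ∧
      ∀ s : ℝ,
        (∑' k : ℕ,
          ‖(∫ x : ℝ in Icc (0:ℝ) (ε k), (ε k)⁻¹ • Complex.exp (-2 * π * I * s * x)) -
            (∫ x : ℝ, Complex.exp (-2 * π * I * s * x) ∂(μ (nk k)))‖ ^ 2) ≤ 5 :=
  rajchman_subsequence_square_bound_general μ hprob δ hδ hsupp hRajchman
end

section
/- Let bₖ = 2^{2k+1} and aₘ = 2^{2m}. Then for any positive integers k₁ ≠ k₂ and m₁, m₂, it is impossible that both -1 + a_{m₁} ≤ -b_{k₁} + u ≤ 1 + a_{m₁} and -1 + a_{m₂} ≤ -b_{k₂} + u ≤ 1 + a_{m₂} hold for the same real u. Equivalently, with tₖ = 2^{-bₖ}, nₘ = 2^{aₘ}, and Cₘ = [nₘ/2, 2nₘ], for each s > 0 there is at most one k with tₖ·s ∈ ⋃ₘ Cₘ. -/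
lemma two_pow_mul_odd_inj : ∀ (a b : ℕ) (p q : ℤ), Odd p → Odd q →
    2 ^ a * p = 2 ^ b * q → a = b := by
  intro a
  induction a with
  | zero =>
    intro b p q hp hq h
    cases b with
    | zero => rfl
    | succ b =>
      exfalso
      simp only [pow_zero, one_mul] at h
      have : Even ((2:ℤ) ^ (b+1) * q) := by
        rw [pow_succ]
        exact ((even_two).mul_left _).mul_right q
      rw [← h] at this
      exact (Int.not_odd_iff_even.mpr this) hp
  | succ a ih =>
    intro b p q hp hq h
    cases b with
    | zero =>
      exfalso
      simp only [pow_zero, one_mul] at h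
      have : Even ((2:ℤ) ^ (a+1) * p) := by
        rw [pow_succ]
        exact ((even_two).mul_left _).mul_right p
      rw [h] at this
      exact (Int.not_odd_iff_even.mpr this) hq
    | succ b =>
      have h2 : (2:ℤ) ^ a * p = 2 ^ b * q := by
        rw [pow_succ, pow_succ] at h
        have h3 : (2:ℤ) * (2 ^ a * p) = 2 * (2 ^ b * q) := by linarith [h]
        exact mul_left_cancel₀ two_ne_zero h3
      exact congrArg Nat.succ (ih b p q hp hq h2)

lemma odd_pow_sub_one (e : ℕ) (he : 1 ≤ e) : Odd ((2:ℤ) ^ e - 1) := by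
  obtain ⟨f, rfl⟩ := Nat.exists_eq_add_of_le he
  exact ⟨2 ^ f - 1, by rw [pow_add]; ring⟩

lemma pow_split (n : ℕ) (h : 2 ≤ n) : (2:ℤ) ^ n = 4 * 2 ^ (n - 2) := by
  rw [show (4:ℤ) = 2 ^ 2 by norm_num, ← pow_add]
  congr 1
  omega

-- the key arithmetic lemma
lemma key (k₁ k₂ m₁ m₂ : ℕ) (hk₂ : 1 ≤ k₂) (hlt : k₂ < k₁) (c : ℤ)
    (hc1 : -2 ≤ c) (hc2 : c ≤ 2) :
    (2:ℤ) ^ (2 * m₂) - 2 ^ (2 * m₁) ≠ 2 ^ (2 * k₁ + 1) - 2 ^ (2 * k₂ + 1) + c := by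
  intro h
  set b := 2 * k₂ + 1 with hb
  set q : ℤ := 2 ^ (2 * (k₁ - k₂)) - 1 with hqdef
  have hq : Odd q := odd_pow_sub_one _ (by omega)
  have hq3 : 3 ≤ q := by
    have : (2:ℤ) ^ 2 ≤ 2 ^ (2 * (k₁ - k₂)) := pow_le_pow_right₀ (by norm_num) (by omega)
    simp only [hqdef]; nlinarith
  have hFq : (2:ℤ) ^ (2 * k₁ + 1) - 2 ^ b = 2 ^ b * q := by
    rw [hqdef, hb, mul_sub, ← pow_add, mul_one]
    congr 2
    omega
  have hpowb : (8:ℤ) ≤ 2 ^ b := by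
    calc (8:ℤ) = 2 ^ 3 := by norm_num
    _ ≤ 2 ^ b := pow_le_pow_right₀ (by norm_num) (by omega)
  have h' : (2:ℤ) ^ (2 * m₂) - 2 ^ (2 * m₁) = 2 ^ b * q + c := by rw [← hFq]; linarith
  have h4q : (4:ℤ) ∣ 2 ^ b * q := Dvd.dvd.mul_right ⟨2 ^ (b - 2), pow_split b (by omega)⟩ q
  rcases lt_trichotomy m₁ m₂ with hm | hm | hm
  · -- m₁ < m₂ : 2^{2m₁} * p = 2^b q + c
    set p : ℤ := 2 ^ (2 * (m₂ - m₁)) - 1 with hpdef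
    have hp : Odd p := odd_pow_sub_one _ (by omega)
    have hLHS : (2:ℤ) ^ (2 * m₂) - 2 ^ (2 * m₁) = 2 ^ (2 * m₁) * p := by
      rw [hpdef, mul_sub, ← pow_add, mul_one]; congr 2; omega
    rw [hLHS] at h'
    rcases Nat.eq_zero_or_pos m₁ with hm1 | hm1
    · -- m₁ = 0 : p = 2^b q + c, p ≡ 3 mod 4
      subst hm1
      simp only [Nat.mul_zero, pow_zero, one_mul] at h'
      have h4p : (4:ℤ) ∣ p + 1 := by
        refine ⟨2 ^ (2 * (m₂ - 0) - 2), ?_⟩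
        rw [hpdef, sub_add_cancel]
        exact pow_split _ (by omega)
      have hc : c = -1 := by omega
      subst hc
      have hp1 : (2:ℤ) ^ (2 * m₂) = p + 1 := by
        rw [hpdef]
        have : 2 * (m₂ - 0) = 2 * m₂ := by omega
        rw [this]; ring
      have heq : (2:ℤ) ^ (2 * m₂) * 1 = 2 ^ b * q := by rw [mul_one, hp1]; linarith
      have := two_pow_mul_odd_inj _ _ _ _ odd_one hq heq
      omega
    · -- m₁ ≥ 1 : 4 ∣ c so c = 0
      have h4L : (4:ℤ) ∣ 2 ^ (2 * m₁) * p :=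
        Dvd.dvd.mul_right ⟨2 ^ (2 * m₁ - 2), pow_split _ (by omega)⟩ p
      have hc : c = 0 := by omega
      subst hc
      rw [add_zero] at h'
      have := two_pow_mul_odd_inj _ _ _ _ hp hq h'
      omega
  · -- m₁ = m₂
    subst hm
    simp only [sub_self] at h'
    nlinarith
  · -- m₂ < m₁ : -2^{2m₂} p = 2^b q + c
    set p : ℤ := 2 ^ (2 * (m₁ - m₂)) - 1 with hpdef
    have hp : Odd p := odd_pow_sub_one _ (by omega)
    have hp3 : 3 ≤ p := by
      have : (2:ℤ) ^ 2 ≤ 2 ^ (2 * (m₁ - m₂)) := pow_le_pow_right₀ (by norm_num) (by omega)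
      simp only [hpdef]; nlinarith
    have hLHS : (2:ℤ) ^ (2 * m₂) - 2 ^ (2 * m₁) = -(2 ^ (2 * m₂) * p) := by
      rw [hpdef, mul_sub, ← pow_add, mul_one]
      have : 2 * m₂ + 2 * (m₁ - m₂) = 2 * m₁ := by omega
      rw [this]; ring
    rw [hLHS] at h'
    have hpos : (0:ℤ) < 2 ^ (2 * m₂) * p := by positivity
    have hqpos : (0:ℤ) < 2 ^ b * q := by positivity
    nlinarith

open Real in
lemma main_lemma (k₁ k₂ m₁ m₂ : ℕ) (hk₁ : 1 ≤ k₁) (hk₂ : 1 ≤ k₂) (hne : k₁ ≠ k₂) :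
    ¬ ∃ u : ℝ,
      (-1 + (2:ℝ) ^ (2 * m₁) ≤ -(2:ℝ) ^ (2 * k₁ + 1) + u ∧
        -(2:ℝ) ^ (2 * k₁ + 1) + u ≤ 1 + (2:ℝ) ^ (2 * m₁)) ∧
      (-1 + (2:ℝ) ^ (2 * m₂) ≤ -(2:ℝ) ^ (2 * k₂ + 1) + u ∧
        -(2:ℝ) ^ (2 * k₂ + 1) + u ≤ 1 + (2:ℝ) ^ (2 * m₂)) := by
  rintro ⟨u, ⟨h1, h2⟩, ⟨h3, h4⟩⟩
  set D : ℤ := ((2:ℤ) ^ (2 * m₂) - 2 ^ (2 * m₁)) - (2 ^ (2 * k₁ + 1) - 2 ^ (2 * k₂ + 1))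
    with hD
  have hDr : (D : ℝ) = ((2:ℝ) ^ (2 * m₂) - 2 ^ (2 * m₁)) -
      ((2:ℝ) ^ (2 * k₁ + 1) - 2 ^ (2 * k₂ + 1)) := by
    rw [hD]; push_cast; ring
  have hD1 : (-2 : ℤ) ≤ D := by
    have : (-2 : ℝ) ≤ (D : ℝ) := by rw [hDr]; linarith
    exact_mod_cast this
  have hD2 : D ≤ 2 := by
    have : (D : ℝ) ≤ 2 := by rw [hDr]; linarith
    exact_mod_cast this
  rcases hne.lt_or_gt with hlt | hlt
  · exact key k₂ k₁ m₂ m₁ hk₁ hlt (-D) (by omega) (by omega) (by rw [hD]; ring)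
  · exact key k₁ k₂ m₁ m₂ hk₂ hlt D hD1 hD2 (by rw [hD]; ring)
open Real in
lemma bridge (s : ℝ) (hs : 0 < s) (k m : ℕ)
    (h : ((2:ℝ) ^ ((2:ℝ) ^ (2 * k + 1)))⁻¹ * s ∈
      Set.Icc ((2:ℝ) ^ ((2:ℝ) ^ (2 * m)) / 2) (2 * (2:ℝ) ^ ((2:ℝ) ^ (2 * m)))) :
    -1 + (2:ℝ) ^ (2 * m) ≤ -(2:ℝ) ^ (2 * k + 1) + Real.logb 2 s ∧
      -(2:ℝ) ^ (2 * k + 1) + Real.logb 2 s ≤ 1 + (2:ℝ) ^ (2 * m) := by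
  obtain ⟨hlo, hhi⟩ := h
  set B : ℝ := (2:ℝ) ^ (2 * k + 1) with hB
  set A : ℝ := (2:ℝ) ^ (2 * m) with hA
  have hBpos : (0:ℝ) < (2:ℝ) ^ B := Real.rpow_pos_of_pos two_pos B
  have hApos : (0:ℝ) < (2:ℝ) ^ A := Real.rpow_pos_of_pos two_pos A
  have hXpos : (0:ℝ) < ((2:ℝ) ^ B)⁻¹ * s := by positivity
  have hlogX : Real.logb 2 (((2:ℝ) ^ B)⁻¹ * s) = -B + Real.logb 2 s := by
    rw [Real.logb_mul (by positivity) (ne_of_gt hs), Real.logb_inv,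
      Real.logb_rpow (by norm_num) (by norm_num)]
  have hloglo : Real.logb 2 ((2:ℝ) ^ A / 2) = A - 1 := by
    rw [Real.logb_div (ne_of_gt hApos) (by norm_num),
      Real.logb_rpow (by norm_num) (by norm_num), Real.logb_self_eq_one (by norm_num)]
  have hloghi : Real.logb 2 (2 * (2:ℝ) ^ A) = 1 + A := by
    rw [Real.logb_mul (by norm_num) (ne_of_gt hApos),
      Real.logb_rpow (by norm_num) (by norm_num), Real.logb_self_eq_one (by norm_num)]
  constructor
  · have := (Real.logb_le_logb (by norm_num : (1:ℝ) < 2) (by positivity) hXpos).mpr hlo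
    rw [hlogX, hloglo] at this
    linarith
  · have := (Real.logb_le_logb (by norm_num : (1:ℝ) < 2) hXpos (by positivity)).mpr hhi
    rw [hlogX, hloghi] at this
    linarith

theorem dyadic_cloud_separation :
    (∀ (k₁ k₂ m₁ m₂ : ℕ), 1 ≤ k₁ → 1 ≤ k₂ → 1 ≤ m₁ → 1 ≤ m₂ → k₁ ≠ k₂ →
      ¬ ∃ u : ℝ,
        (-1 + (2:ℝ) ^ (2 * m₁) ≤ -(2:ℝ) ^ (2 * k₁ + 1) + u ∧
          -(2:ℝ) ^ (2 * k₁ + 1) + u ≤ 1 + (2:ℝ) ^ (2 * m₁)) ∧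
        (-1 + (2:ℝ) ^ (2 * m₂) ≤ -(2:ℝ) ^ (2 * k₂ + 1) + u ∧
          -(2:ℝ) ^ (2 * k₂ + 1) + u ≤ 1 + (2:ℝ) ^ (2 * m₂))) ∧
    (∀ s : ℝ, 0 < s → ∀ k₁ k₂ : ℕ, 1 ≤ k₁ → 1 ≤ k₂ →
      ((2:ℝ) ^ ((2:ℝ) ^ (2 * k₁ + 1)))⁻¹ * s ∈
        (⋃ m : ℕ, Set.Icc ((2:ℝ) ^ ((2:ℝ) ^ (2 * m)) / 2)
          (2 * (2:ℝ) ^ ((2:ℝ) ^ (2 * m)))) →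
      ((2:ℝ) ^ ((2:ℝ) ^ (2 * k₂ + 1)))⁻¹ * s ∈
        (⋃ m : ℕ, Set.Icc ((2:ℝ) ^ ((2:ℝ) ^ (2 * m)) / 2)
          (2 * (2:ℝ) ^ ((2:ℝ) ^ (2 * m)))) →
      k₁ = k₂) := by
  constructor
  · intro k₁ k₂ m₁ m₂ hk₁ hk₂ _ _ hne
    exact main_lemma k₁ k₂ m₁ m₂ hk₁ hk₂ hne
  · intro s hs k₁ k₂ hk₁ hk₂ h₁ h₂
    by_contra hne
    obtain ⟨m₁, hm₁⟩ := Set.mem_iUnion.mp h₁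
    obtain ⟨m₂, hm₂⟩ := Set.mem_iUnion.mp h₂
    exact main_lemma k₁ k₂ m₁ m₂ hk₁ hk₂ hne
      ⟨Real.logb 2 s, bridge s hs k₁ m₁ hm₁, bridge s hs k₂ m₂ hm₂⟩
end
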